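/- Decision for secrecy: let F : Atom → Set Msg → L be any function, p a protocol with variables, and T a set of messages with pairwise disjoint variables among distinct elements such that for every step (R⁻, r⁺) ∈ p, r⁺ ∈ T and R⁻ ⊆ T; let W be the witness function for T, extended to a set M of ground messages by W(α, M) := ⊓_{t ∈ M} W(α, t), and assume that W, as a function of an atom and a set of ground messages, is safe (well-formed and full-invariant-by-intruder). If for every step (R⁻, r⁺) ∈ p, every substitution σ and every atom α we have ⊓ { G_F(α, m', σ') : m' ∈ T, σ' a substitution with m'σ' = r⁺σ' } ⊒ ⌜α⌝ ⊓ ⊓_{m ∈ R⁻} G_F(α, m, σ), then the ground instantiation P := { (R⁻σ, r⁺σ) : (R⁻, r⁺) ∈ p, σ a substitution } of p keeps its secret inputs: for every valid trace (N₁,s₁),…,(Nₙ,sₙ) of P from initial knowledge K₀ (a set of ground messages) and every atom α with W(α, K₀) ⊒ ⌜α⌝, ⌜α⌝ ≠ ⊥ and ¬(⌜K(I)⌝ ⊒ ⌜α⌝), we have ¬(Kₙ ⊢ atom α). -/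

import Mathlib

/-!
Along a valid trace of a protocol that is increasing for a safe function `W`, the level
`W(α, Kᵢ)` of a secret never falls below `⌜α⌝`: every received message is deducible from
`Kᵢ`, so full invariance bounds `W` on it from below by `W(α, Kᵢ)`, and the increasing step
carries the bound to the sent message. As `W(α, atom α) = ⊥ ≠ ⌜α⌝`, the secret is never
deduced. The static condition makes the ground instantiation `W`-increasing, because
patterns of `T` have disjoint variables: a source `(m', σ')` of `r⁺σ` merges with `σ` into
one substitution unifying `m'` and `r⁺`.
-/

/-- Messages: atoms, pairs, and encryptions (`enc m k` encrypts `m` with key `k`). -/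
inductive Msg (Atom : Type) : Type
  | atom : Atom → Msg Atom
  | pair : Msg Atom → Msg Atom → Msg Atom
  | enc  : Msg Atom → Atom → Msg Atom

namespace Msg

/-- The set `𝒜(m)` of atoms occurring in a message. -/
def atoms {Atom : Type} : Msg Atom → Set Atom
  | atom a => {a}
  | pair m₁ m₂ => m₁.atoms ∪ m₂.atoms
  | enc m k => m.atoms ∪ {k}

end Msg

/-- The set `𝒜(M)` of atoms occurring in a set of messages. -/
def atomsOf {Atom : Type} (M : Set (Msg Atom)) : Set Atom := ⋃ m ∈ M, m.atoms

/-- Dolev–Yao deduction `M ⊢ m`, relative to a set of keys and a key-inverse map. -/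
inductive Deduces {Atom : Type} (Key : Set Atom) (inv : Atom → Atom)
    (M : Set (Msg Atom)) : Msg Atom → Prop
  | ax {m} (h : m ∈ M) : Deduces Key inv M m
  | pair {m₁ m₂} (h₁ : Deduces Key inv M m₁) (h₂ : Deduces Key inv M m₂) :
      Deduces Key inv M (Msg.pair m₁ m₂)
  | fst {m₁ m₂} (h : Deduces Key inv M (Msg.pair m₁ m₂)) : Deduces Key inv M m₁
  | snd {m₁ m₂} (h : Deduces Key inv M (Msg.pair m₁ m₂)) : Deduces Key inv M m₂
  | enc {m k} (hk : k ∈ Key) (h : Deduces Key inv M m)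
      (hkey : Deduces Key inv M (Msg.atom k)) : Deduces Key inv M (Msg.enc m k)
  | dec {m k} (hk : k ∈ Key) (h : Deduces Key inv M (Msg.enc m k))
      (hkey : Deduces Key inv M (Msg.atom (inv k))) : Deduces Key inv M m

/-- A well-formed function on atoms and sets of messages. -/
def WellFormed {Atom L : Type} [CompleteLattice L]
    (F : Atom → Set (Msg Atom) → L) : Prop :=
  (∀ α : Atom, F α {Msg.atom α} = ⊥) ∧
  (∀ (α : Atom) (M : Set (Msg Atom)), α ∉ atomsOf M → F α M = ⊤) ∧
  (∀ (α : Atom) (M₁ M₂ : Set (Msg Atom)), F α (M₁ ∪ M₂) = F α M₁ ⊓ F α M₂)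

/-- A full-invariant-by-intruder function: deduction cannot lower the level of an
atom unless the intruder is authorized to know it (`⌜K(I)⌝ ⊒ ⌜α⌝`). -/
def FullInvariant {Atom L : Type} [CompleteLattice L] (Key : Set Atom) (inv : Atom → Atom)
    (lvl : Atom → L) (KI : L) (F : Atom → Set (Msg Atom) → L) : Prop :=
  ∀ (M : Set (Msg Atom)) (m : Msg Atom), Deduces Key inv M m →
    ∀ α ∈ m.atoms, F α M ≤ F α {m} ∨ lvl α ≤ KI

/-- A safe function: well-formed and full-invariant-by-intruder. -/
def Safe {Atom L : Type} [CompleteLattice L] (Key : Set Atom) (inv : Atom → Atom)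
    (lvl : Atom → L) (KI : L) (F : Atom → Set (Msg Atom) → L) : Prop :=
  WellFormed F ∧ FullInvariant Key inv lvl KI F

/-- A ground protocol `P` is `F`-increasing: for each step `(N, s)` and each atom `α` of `s`,
`F(α, s) ⊒ ⌜α⌝ ⊓ F(α, N)`. -/
def Increasing {Atom L : Type} [CompleteLattice L] (lvl : Atom → L)
    (F : Atom → Set (Msg Atom) → L) (P : Set (Set (Msg Atom) × Msg Atom)) : Prop :=
  ∀ st ∈ P, ∀ α ∈ (Prod.snd st).atoms, lvl α ⊓ F α st.1 ≤ F α {st.2}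

/-- The intruder knowledge `Kᵢ = K₀ ∪ {s₁, …, sᵢ}` after the first `i` steps of a trace. -/
def knowAfter {Atom : Type} (K₀ : Set (Msg Atom))
    (tr : List (Set (Msg Atom) × Msg Atom)) (i : ℕ) : Set (Msg Atom) :=
  K₀ ∪ { m | ∃ st ∈ tr.take i, st.2 = m }

/-- A valid trace of protocol `P` from initial knowledge `K₀`: every step belongs to `P`
and each received message of step `i+1` is deducible from `Kᵢ`. -/
def ValidTrace {Atom : Type} (Key : Set Atom) (inv : Atom → Atom)
    (P : Set (Set (Msg Atom) × Msg Atom)) (K₀ : Set (Msg Atom))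
    (tr : List (Set (Msg Atom) × Msg Atom)) : Prop :=
  ∀ (i : ℕ) (hi : i < tr.length), tr.get ⟨i, hi⟩ ∈ P ∧
    ∀ m ∈ (tr.get ⟨i, hi⟩).1, Deduces Key inv (knowAfter K₀ tr i) m
open scoped Classical in
/-- Homomorphic application `mσ` of a substitution `σ` on the variables `Var`. -/
noncomputable def Msg.subst {Atom : Type} (Var : Set Atom) (σ : Atom → Msg Atom) :
    Msg Atom → Msg Atom
  | .atom a => if a ∈ Var then σ a else .atom a
  | .pair m₁ m₂ => .pair (Msg.subst Var σ m₁) (Msg.subst Var σ m₂)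
  | .enc m k => .enc (Msg.subst Var σ m) k

/-- A message is ground if no variable occurs in it. -/
def Ground {Atom : Type} (Var : Set Atom) (m : Msg Atom) : Prop :=
  ∀ a ∈ m.atoms, a ∉ Var

/-- A substitution assigns a ground message to every variable. -/
def IsSubst {Atom : Type} (Var : Set Atom) (σ : Atom → Msg Atom) : Prop :=
  ∀ X ∈ Var, Ground Var (σ X)

open scoped Classical in
/-- `derivE Var ε S m`: replace in `m` every variable not in `S` by the constant `ε`.
`derivE Var ε ∅ m` is the full derivative `∂m`, and `derivE Var ε {X} m` is `∂[X̄]m`. -/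
noncomputable def derivE {Atom : Type} (Var : Set Atom) (ε : Atom) (S : Set Atom) :
    Msg Atom → Msg Atom
  | .atom a => if a ∈ Var ∧ a ∉ S then .atom ε else .atom a
  | .pair m₁ m₂ => .pair (derivE Var ε S m₁) (derivE Var ε S m₂)
  | .enc m k => .enc (derivE Var ε S m) k

open scoped Classical in
/-- The derivative evaluation `G_F(α, m, σ)`: evaluate `F` on `∂m` if `α` occurs there,
on `∂[X̄]m` if `α` comes from the unique variable `X` of `m` with `σ(X) = atom α`,
and `⊤` otherwise. -/
noncomputable def derivEval {Atom L : Type} [CompleteLattice L]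
    (Var : Set Atom) (ε : Atom) (F : Atom → Set (Msg Atom) → L)
    (α : Atom) (m : Msg Atom) (σ : Atom → Msg Atom) : L :=
  if α ∈ (derivE Var ε ∅ m).atoms then F α {derivE Var ε ∅ m}
  else if h : ∃! X, X ∈ Var ∧ X ∈ m.atoms ∧ σ X = Msg.atom α then
    F h.choose {derivE Var ε {h.choose} m}
  else ⊤

/-- The witness function for the set of patterns `T`, on a ground message `t`:
the meet of the derivative evaluations over all sources `(m', σ')` of `t` in `T`. -/
noncomputable def witness {Atom L : Type} [CompleteLattice L]
    (Var : Set Atom) (ε : Atom) (F : Atom → Set (Msg Atom) → L)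
    (T : Set (Msg Atom)) (α : Atom) (t : Msg Atom) : L :=
  sInf { l | ∃ m' ∈ T, ∃ σ', IsSubst Var σ' ∧ Msg.subst Var σ' m' = t ∧
              l = derivEval Var ε F α m' σ' }

/-- The witness function extended to a set of ground messages, by taking meets. -/
noncomputable def witnessSet {Atom L : Type} [CompleteLattice L]
    (Var : Set Atom) (ε : Atom) (F : Atom → Set (Msg Atom) → L)
    (T : Set (Msg Atom)) (α : Atom) (M : Set (Msg Atom)) : L :=
  ⨅ t ∈ M, witness Var ε F T α t

section Substitution

variable {Atom : Type} (Var : Set Atom)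

lemma Msg.subst_congr {σ τ : Atom → Msg Atom} {m : Msg Atom}
    (h : ∀ a ∈ m.atoms, a ∈ Var → σ a = τ a) :
    Msg.subst Var σ m = Msg.subst Var τ m := by
  induction m with
  | atom a =>
      simp only [Msg.subst]
      split_ifs with ha
      · exact h a rfl ha
      · rfl
  | pair m₁ m₂ ih₁ ih₂ =>
      simp only [Msg.subst]
      rw [ih₁ fun a ha => h a (Or.inl ha), ih₂ fun a ha => h a (Or.inr ha)]
  | enc m k ih =>
      simp only [Msg.subst]
      rw [ih fun a ha => h a (Or.inl ha)]

lemma derivEval_congr {L : Type} [CompleteLattice L] (ε : Atom)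
    (F : Atom → Set (Msg Atom) → L) (α : Atom) {m : Msg Atom} {σ τ : Atom → Msg Atom}
    (h : ∀ a ∈ m.atoms, a ∈ Var → σ a = τ a) :
    derivEval Var ε F α m σ = derivEval Var ε F α m τ := by
  have hsrc : (fun X => X ∈ Var ∧ X ∈ m.atoms ∧ σ X = Msg.atom α) =
      (fun X => X ∈ Var ∧ X ∈ m.atoms ∧ τ X = Msg.atom α) := by
    ext X
    exact and_congr_right fun hX => and_congr_right fun hXm => by rw [h X hXm hX]
  classical
  exact congrArg (fun src : Atom → Prop =>
    if α ∈ (derivE Var ε ∅ m).atoms then F α {derivE Var ε ∅ m}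
    else if h : ∃! X, src X then F h.choose {derivE Var ε {h.choose} m} else ⊤) hsrc

end Substitution

section Trace

variable {Atom : Type} (K₀ : Set (Msg Atom)) (tr : List (Set (Msg Atom) × Msg Atom))

lemma knowAfter_zero : knowAfter K₀ tr 0 = K₀ := by
  simp [knowAfter]

lemma knowAfter_succ {i : ℕ} (hi : i < tr.length) :
    knowAfter K₀ tr (i + 1) = knowAfter K₀ tr i ∪ {(tr.get ⟨i, hi⟩).2} := by
  simp only [knowAfter, List.take_add_one, List.getElem?_eq_getElem hi, Option.toList_some,
    List.mem_append, List.mem_singleton, List.get_eq_getElem]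
  ext m
  simp only [Set.mem_union, Set.mem_singleton_iff]
  constructor
  · rintro (hK | ⟨st, (hst | rfl), rfl⟩)
    · exact Or.inl (Or.inl hK)
    · exact Or.inl (Or.inr ⟨st, hst, rfl⟩)
    · exact Or.inr rfl
  · rintro ((hK | ⟨st, hst, rfl⟩) | rfl)
    · exact Or.inl hK
    · exact Or.inr ⟨st, Or.inl hst, rfl⟩
    · exact Or.inr ⟨_, Or.inr rfl, rfl⟩

end Trace

section SafeFunction

variable {Atom L : Type} [CompleteLattice L] {Key : Set Atom} {inv : Atom → Atom}
  {lvl : Atom → L} {KI : L} {F : Atom → Set (Msg Atom) → L}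

lemma WellFormed.apply_empty (hF : WellFormed F) (α : Atom) : F α ∅ = ⊤ :=
  hF.2.1 α ∅ (by simp [atomsOf])

lemma WellFormed.apply_singleton_of_notMem (hF : WellFormed F) {α : Atom} {m : Msg Atom}
    (hαm : α ∉ m.atoms) : F α {m} = ⊤ :=
  hF.2.1 α {m} (by simpa [atomsOf] using hαm)

lemma Safe.le_singleton_of_deduces (hF : Safe Key inv lvl KI F) {α : Atom}
    (hα : ¬ lvl α ≤ KI) {M : Set (Msg Atom)} {m : Msg Atom} (hm : Deduces Key inv M m) :
    F α M ≤ F α {m} := by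
  by_cases hαm : α ∈ m.atoms
  · exact (hF.2 M m hm α hαm).resolve_right hα
  · exact (hF.1.apply_singleton_of_notMem hαm).symm ▸ le_top

lemma Safe.le_of_forall_deduces (hF : Safe Key inv lvl KI F) {α : Atom}
    (hα : ¬ lvl α ≤ KI) {M N : Set (Msg Atom)} (hN : N.Finite)
    (hMN : ∀ m ∈ N, Deduces Key inv M m) : F α M ≤ F α N := by
  induction N, hN using Set.Finite.induction_on with
  | empty => exact (hF.1.apply_empty α).symm ▸ le_top
  | @insert m N _ _ ih =>
      rw [Set.insert_eq, hF.1.2.2]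
      exact le_inf (hF.le_singleton_of_deduces hα (hMN m (Set.mem_insert m N)))
        (ih fun m' hm' => hMN m' (Set.mem_insert_of_mem m hm'))

lemma Safe.le_knowAfter (hF : Safe Key inv lvl KI F) {P : Set (Set (Msg Atom) × Msg Atom)}
    (hP : Increasing lvl F P) (hPfin : ∀ st ∈ P, st.1.Finite) {K₀ : Set (Msg Atom)}
    {tr : List (Set (Msg Atom) × Msg Atom)} (htr : ValidTrace Key inv P K₀ tr) {α : Atom}
    (hα₀ : lvl α ≤ F α K₀) (hα : ¬ lvl α ≤ KI) :
    ∀ i ≤ tr.length, lvl α ≤ F α (knowAfter K₀ tr i) := by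
  intro i
  induction i with
  | zero => exact fun _ => (knowAfter_zero K₀ tr).symm ▸ hα₀
  | succ i ih =>
      intro hi
      have hK := ih (Nat.le_of_succ_le hi)
      obtain ⟨hstep, hrecv⟩ := htr i hi
      rw [knowAfter_succ K₀ tr hi, hF.1.2.2]
      refine le_inf hK ?_
      have hN : lvl α ≤ F α (tr.get ⟨i, hi⟩).1 :=
        hK.trans (hF.le_of_forall_deduces hα (hPfin _ hstep) hrecv)
      by_cases hαs : α ∈ (tr.get ⟨i, hi⟩).2.atoms
      · exact (le_inf le_rfl hN).trans (hP _ hstep α hαs)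
      · exact (hF.1.apply_singleton_of_notMem hαs).symm ▸ le_top

theorem Safe.not_deduces_of_increasing (hF : Safe Key inv lvl KI F)
    {P : Set (Set (Msg Atom) × Msg Atom)} (hP : Increasing lvl F P)
    (hPfin : ∀ st ∈ P, st.1.Finite) {K₀ : Set (Msg Atom)}
    {tr : List (Set (Msg Atom) × Msg Atom)} (htr : ValidTrace Key inv P K₀ tr) {α : Atom}
    (hα₀ : lvl α ≤ F α K₀) (hα₁ : lvl α ≠ ⊥) (hα₂ : ¬ lvl α ≤ KI) :
    ¬ Deduces Key inv (knowAfter K₀ tr tr.length) (Msg.atom α) := by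
  intro hded
  have hsecret := hF.le_knowAfter hP hPfin htr hα₀ hα₂ tr.length le_rfl
  have hbot : F α {Msg.atom α} = ⊥ := hF.1.1 α
  exact hα₁ (le_bot_iff.mp (hbot ▸ hsecret.trans (hF.le_singleton_of_deduces hα₂ hded)))

end SafeFunction

section Witness

variable {Atom L : Type} [CompleteLattice L] (Var : Set Atom) (ε : Atom)
  (F : Atom → Set (Msg Atom) → L) (T : Set (Msg Atom)) (α : Atom)

def groundInstances (p : Set (Set (Msg Atom) × Msg Atom)) : Set (Set (Msg Atom) × Msg Atom) :=
  { st | ∃ R r σ, (R, r) ∈ p ∧ IsSubst Var σ ∧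
      st = (Msg.subst Var σ '' R, Msg.subst Var σ r) }

lemma witnessSet_singleton (t : Msg Atom) :
    witnessSet Var ε F T α {t} = witness Var ε F T α t := by
  simp [witnessSet]

lemma witness_subst_le_derivEval {m : Msg Atom} (hm : m ∈ T) {σ : Atom → Msg Atom}
    (hσ : IsSubst Var σ) :
    witness Var ε F T α (Msg.subst Var σ m) ≤ derivEval Var ε F α m σ :=
  sInf_le ⟨m, hm, σ, hσ, rfl, rfl⟩

lemma witnessSet_image_le {R : Set (Msg Atom)} (hR : R ⊆ T) {σ : Atom → Msg Atom}
    (hσ : IsSubst Var σ) :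
    witnessSet Var ε F T α (Msg.subst Var σ '' R) ≤ ⨅ m ∈ R, derivEval Var ε F α m σ :=
  le_iInf₂ fun _ hm => (biInf_le _ (Set.mem_image_of_mem _ hm)).trans
    (witness_subst_le_derivEval Var ε F T α (hR hm) hσ)

lemma sInf_unifiers_le_witness_subst
    (hT : ∀ m₁ ∈ T, ∀ m₂ ∈ T, m₁ ≠ m₂ → Disjoint (m₁.atoms ∩ Var) (m₂.atoms ∩ Var))
    {r : Msg Atom} (hr : r ∈ T) {σ : Atom → Msg Atom} (hσ : IsSubst Var σ) :
    sInf { l | ∃ m' ∈ T, ∃ σ', IsSubst Var σ' ∧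
        Msg.subst Var σ' m' = Msg.subst Var σ' r ∧ l = derivEval Var ε F α m' σ' } ≤
      witness Var ε F T α (Msg.subst Var σ r) := by
  classical
  refine le_sInf ?_
  rintro l ⟨m', hm', σ', hσ', hsrc, rfl⟩
  by_cases hm'r : m' = r
  · subst hm'r
    exact sInf_le ⟨m', hm', σ', hσ', rfl, rfl⟩
  let τ : Atom → Msg Atom := fun X => if X ∈ r.atoms then σ X else σ' X
  have hτ : IsSubst Var τ := fun X hX => by
    by_cases hXr : X ∈ r.atoms
    · simpa [τ, hXr] using hσ X hX
    · simpa [τ, hXr] using hσ' X hX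
  have hτm' : ∀ a ∈ m'.atoms, a ∈ Var → σ' a = τ a := fun a ha hv => by
    have hnr : a ∉ r.atoms := fun har =>
      Set.disjoint_left.mp (hT m' hm' r hr hm'r) ⟨ha, hv⟩ ⟨har, hv⟩
    simp [τ, hnr]
  have hτr : ∀ a ∈ r.atoms, a ∈ Var → σ a = τ a := fun a ha _ => by simp [τ, ha]
  refine sInf_le ⟨m', hm', τ, hτ, ?_, derivEval_congr Var ε F α hτm'⟩
  rw [← Msg.subst_congr Var hτm', ← Msg.subst_congr Var hτr, hsrc]

lemma increasing_groundInstances (lvl : Atom → L) {p : Set (Set (Msg Atom) × Msg Atom)}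
    (hT : ∀ m₁ ∈ T, ∀ m₂ ∈ T, m₁ ≠ m₂ → Disjoint (m₁.atoms ∩ Var) (m₂.atoms ∩ Var))
    (hcov : ∀ st ∈ p, st.2 ∈ T ∧ st.1 ⊆ T)
    (hstatic : ∀ st ∈ p, ∀ σ : Atom → Msg Atom, IsSubst Var σ → ∀ α : Atom,
      lvl α ⊓ (⨅ m ∈ st.1, derivEval Var ε F α m σ) ≤
        sInf { l | ∃ m' ∈ T, ∃ σ', IsSubst Var σ' ∧
                Msg.subst Var σ' m' = Msg.subst Var σ' st.2 ∧
                l = derivEval Var ε F α m' σ' }) :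
    Increasing lvl (witnessSet Var ε F T) (groundInstances Var p) := by
  rintro _ ⟨R, r, σ, hp, hσ, rfl⟩ α -
  calc lvl α ⊓ witnessSet Var ε F T α (Msg.subst Var σ '' R)
      ≤ lvl α ⊓ ⨅ m ∈ R, derivEval Var ε F α m σ :=
        inf_le_inf_left _ (witnessSet_image_le Var ε F T α (hcov _ hp).2 hσ)
    _ ≤ _ := hstatic _ hp σ hσ α
    _ ≤ witness Var ε F T α (Msg.subst Var σ r) :=
        sInf_unifiers_le_witness_subst Var ε F T α hT (hcov _ hp).1 hσ
    _ = witnessSet Var ε F T α {Msg.subst Var σ r} := (witnessSet_singleton ..).symm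

lemma groundInstances_finite {p : Set (Set (Msg Atom) × Msg Atom)}
    (hpfin : ∀ st ∈ p, st.1.Finite) : ∀ st ∈ groundInstances Var p, st.1.Finite := by
  rintro _ ⟨R, r, σ, hp, -, rfl⟩
  exact (hpfin _ hp).image _

end Witness

theorem decision_for_secrecy_general
    {Atom L : Type} [CompleteLattice L]
    (Var Key : Set Atom)
    (inv : Atom → Atom)
    (ε : Atom)
    (lvl : Atom → L) (KI : L)
    (F : Atom → Set (Msg Atom) → L)
    (p : Set (Set (Msg Atom) × Msg Atom)) (hpfin : ∀ st ∈ p, st.1.Finite)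
    (T : Set (Msg Atom))
    (hT : ∀ m₁ ∈ T, ∀ m₂ ∈ T, m₁ ≠ m₂ → Disjoint (m₁.atoms ∩ Var) (m₂.atoms ∩ Var))
    (hcov : ∀ st ∈ p, st.2 ∈ T ∧ st.1 ⊆ T)
    (hsafe : Safe Key inv lvl KI (witnessSet Var ε F T))
    (hstatic : ∀ st ∈ p, ∀ σ : Atom → Msg Atom, IsSubst Var σ → ∀ α : Atom,
      lvl α ⊓ (⨅ m ∈ st.1, derivEval Var ε F α m σ) ≤
        sInf { l | ∃ m' ∈ T, ∃ σ', IsSubst Var σ' ∧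
                Msg.subst Var σ' m' = Msg.subst Var σ' st.2 ∧
                l = derivEval Var ε F α m' σ' })
    (K₀ : Set (Msg Atom))
    (tr : List (Set (Msg Atom) × Msg Atom))
    (htr : ValidTrace Key inv
      { st | ∃ R r σ, (R, r) ∈ p ∧ IsSubst Var σ ∧
          st = (Msg.subst Var σ '' R, Msg.subst Var σ r) } K₀ tr)
    (α : Atom)
    (hα₀ : lvl α ≤ witnessSet Var ε F T α K₀) (hα₁ : lvl α ≠ ⊥) (hα₂ : ¬ lvl α ≤ KI) :
    ¬ Deduces Key inv (knowAfter K₀ tr tr.length) (Msg.atom α) :=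
  hsafe.not_deduces_of_increasing (increasing_groundInstances Var ε F T lvl hT hcov hstatic)
    (groundInstances_finite Var hpfin) htr hα₀ hα₁ hα₂

/-- **Decision for secrecy.** If the extended witness function `W` is safe and the static
lower-bound condition holds on every step of the protocol with variables `p`, then the
ground instantiation of `p` keeps its secret inputs. -/
theorem decision_for_secrecy
    {Atom L : Type} [Countable Atom] [CompleteLattice L]
    (Var Key : Set Atom) (hVK : Disjoint Var Key)
    (inv : Atom → Atom) (hinv : ∀ k ∈ Key, inv k ∈ Key ∧ inv (inv k) = k)
    (ε : Atom) (hε : ε ∉ Var ∪ Key)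
    (lvl : Atom → L) (KI : L)
    (F : Atom → Set (Msg Atom) → L)
    (p : Set (Set (Msg Atom) × Msg Atom)) (hpfin : ∀ st ∈ p, st.1.Finite)
    (T : Set (Msg Atom))
    (hT : ∀ m₁ ∈ T, ∀ m₂ ∈ T, m₁ ≠ m₂ → Disjoint (m₁.atoms ∩ Var) (m₂.atoms ∩ Var))
    (hcov : ∀ st ∈ p, st.2 ∈ T ∧ st.1 ⊆ T)
    (hsafe : Safe Key inv lvl KI (witnessSet Var ε F T))
    (hstatic : ∀ st ∈ p, ∀ σ : Atom → Msg Atom, IsSubst Var σ → ∀ α : Atom,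
      lvl α ⊓ (⨅ m ∈ st.1, derivEval Var ε F α m σ) ≤
        sInf { l | ∃ m' ∈ T, ∃ σ', IsSubst Var σ' ∧
                Msg.subst Var σ' m' = Msg.subst Var σ' st.2 ∧
                l = derivEval Var ε F α m' σ' })
    (K₀ : Set (Msg Atom)) (hK₀ : ∀ m ∈ K₀, Ground Var m)
    (tr : List (Set (Msg Atom) × Msg Atom))
    (htr : ValidTrace Key inv
      { st | ∃ R r σ, (R, r) ∈ p ∧ IsSubst Var σ ∧
          st = (Msg.subst Var σ '' R, Msg.subst Var σ r) } K₀ tr)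
    (α : Atom)
    (hα₀ : lvl α ≤ witnessSet Var ε F T α K₀) (hα₁ : lvl α ≠ ⊥) (hα₂ : ¬ lvl α ≤ KI) :
    ¬ Deduces Key inv (knowAfter K₀ tr tr.length) (Msg.atom α) :=
  decision_for_secrecy_general Var Key inv ε lvl KI F p hpfin T hT hcov hsafe hstatic K₀ tr htr α
    hα₀ hα₁ hα₂
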